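/- Let H be a finite connected triangle-free simple graph with at least one edge, let k ≥ 1 be an integer, let H(k) be the join of H with the vertex-disjoint union of k triangles, and let G(k) = KG(H(k)) be the complement of the line graph of H(k). Then χ(G(k)) = cd₂(H(k)) if and only if α(H) ≤ k. -/

import Mathlib

/-!
Colour classes of `KG F` are pairwise intersecting sets of edges, hence stars or triangles.
Stars at the `n` vertices of `H` together with the `k` triangles colour `KG (H(k))`, so
`χ ≤ n + k`. Conversely, let `U` be the set of vertices of `H` that are not centres of star
classes. Each kind of class absorbs only a bounded number of the `3k|U|` join edges at `U`, of
the `3k` triangle edges and of the edges of `H` inside `U`; together with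
`|U| ≤ α(H) + e(H[U])`, improved by one when `H` is connected and triangle-free, this gives
`χ ≥ n + k` if `α(H) ≤ k` and `χ > n + 2k - α(H)` otherwise. On the other side, a bipartite
induced subgraph of `H(k)` is the union of two independent sets, each inside `H` or meeting
every triangle at most once, so `cd₂(H(k)) = n + k` if `α(H) ≤ k`, while keeping a maximum
independent set of `H` and one vertex per triangle shows `cd₂(H(k)) ≤ n + 2k - α(H)`.
-/

open SimpleGraph

/-- `KG H` is the complement of the line graph of `H`: its vertices are the edges of `H`,
two of them being adjacent exactly when the corresponding edges of `H` are disjoint. -/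
def KG {V : Type*} (H : SimpleGraph V) : SimpleGraph H.edgeSet where
  Adj e f := e ≠ f ∧ ∀ v, v ∈ (e : Sym2 V) → v ∉ (f : Sym2 V)
  symm := by
    constructor
    rintro e f ⟨hne, h⟩
    exact ⟨hne.symm, fun v hvf hve => h v hve hvf⟩
  loopless := by
    constructor
    rintro e ⟨hne, -⟩
    exact hne rfl

/-- The chromatic number: least `n` such that `G` has a proper coloring with `n` colors. -/
noncomputable def chromNum {W : Type*} (G : SimpleGraph W) : ℕ :=
  sInf {n | G.Colorable n}

/-- The 2-colorability defect: the minimum number of vertices whose removal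
leaves a bipartite (i.e. 2-colorable) induced subgraph. -/
noncomputable def cd2 {V : Type*} (H : SimpleGraph V) : ℕ :=
  sInf {n | ∃ X : Set V, X.ncard = n ∧ (H.induce Xᶜ).Colorable 2}

/-- The independence number. -/
noncomputable def indepNum {V : Type*} (H : SimpleGraph V) : ℕ :=
  sSup {n | ∃ S : Set V, (∀ u ∈ S, ∀ v ∈ S, ¬ H.Adj u v) ∧ S.ncard = n}

/-- The join of two graphs on disjoint vertex sets: their disjoint union together with
all edges between a vertex of the first and a vertex of the second. -/
def gJoin {V₁ V₂ : Type*} (H₁ : SimpleGraph V₁) (H₂ : SimpleGraph V₂) :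
    SimpleGraph (V₁ ⊕ V₂) where
  Adj x y :=
    match x, y with
    | .inl a, .inl b => H₁.Adj a b
    | .inl _, .inr _ => True
    | .inr _, .inl _ => True
    | .inr a, .inr b => H₂.Adj a b
  symm := by
    constructor
    rintro (a | a) (b | b) h
    · exact h.symm
    · trivial
    · trivial
    · exact h.symm
  loopless := by
    constructor
    rintro (a | a) h
    · exact H₁.loopless.irrefl a h
    · exact H₂.loopless.irrefl a h

/-- The vertex-disjoint union of `k` triangles, on the vertex set `Fin k × Fin 3`. -/
def kTriangles (k : ℕ) : SimpleGraph (Fin k × Fin 3) where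
  Adj p q := p.1 = q.1 ∧ p.2 ≠ q.2
  symm := by
    constructor
    rintro p q ⟨h1, h2⟩
    exact ⟨h1.symm, h2.symm⟩
  loopless := by
    constructor
    rintro p ⟨-, h⟩
    exact h rfl

/-- `Hk H k` is the join of `H` with the vertex-disjoint union of `k` triangles. -/
def Hk {V : Type*} (H : SimpleGraph V) (k : ℕ) : SimpleGraph (V ⊕ Fin k × Fin 3) :=
  gJoin H (kTriangles k)

open Finset

open scoped Classical

section IndependenceNumber

variable {V : Type*} {H : SimpleGraph V}

theorem indepNum_eq_indepNum [Finite V] (H : SimpleGraph V) :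
    _root_.indepNum H = H.indepNum := by
  unfold _root_.indepNum SimpleGraph.indepNum
  congr 1
  ext n
  constructor
  · rintro ⟨S, hS, rfl⟩
    refine ⟨S.toFinite.toFinset, ⟨?_, ?_⟩⟩
    · simpa [IsIndepSet, Set.Pairwise] using fun u hu v hv _ => hS u hu v hv
    · exact (Set.ncard_eq_toFinset_card S).symm
  · rintro ⟨s, hs, rfl⟩
    refine ⟨s, fun u hu v hv huv => ?_, Set.ncard_coe_finset s⟩
    exact hs hu hv (H.ne_of_adj huv) huv

theorem SimpleGraph.CliqueFree.not_adj_of_adj_of_adj (htf : H.CliqueFree 3) {a b c : V}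
    (hab : H.Adj a b) (hac : H.Adj a c) : ¬H.Adj b c := fun hbc =>
  htf {a, b, c} (is3Clique_triple_iff.2 ⟨hab, hac, hbc⟩)

end IndependenceNumber

section TwoColorabilityDefect

variable {W : Type*} [Fintype W] {G : SimpleGraph W}

theorem cd2_add_card_add_card_le {A B : Finset W} (hA : G.IsIndepSet A) (hB : G.IsIndepSet B)
    (hAB : Disjoint A B) : cd2 G + #A + #B ≤ Fintype.card W := by
  let c : ((↑(A ∪ B) : Set W)ᶜᶜ : Set W) → Fin 2 := fun x => if (x : W) ∈ A then 0 else 1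
  have hc : (G.induce (↑(A ∪ B) : Set W)ᶜᶜ).Colorable 2 := by
    refine ⟨Coloring.mk c fun {x y} hxy hcxy => ?_⟩
    obtain ⟨x, hx⟩ := x
    obtain ⟨y, hy⟩ := y
    simp only [compl_compl, coe_union, Set.mem_union, mem_coe] at hx hy
    by_cases hxA : x ∈ A <;> by_cases hyA : y ∈ A <;> simp_all [c]
    · exact hA hxA hyA (G.ne_of_adj hxy) hxy
    · exact hB hx hy (G.ne_of_adj hxy) hxy
  have hle : cd2 G ≤ (↑(A ∪ B) : Set W)ᶜ.ncard := Nat.sInf_le ⟨_, rfl, hc⟩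
  have hsplit := Set.ncard_add_ncard_compl (↑(A ∪ B) : Set W)
  rw [Set.ncard_coe_finset, card_union_of_disjoint hAB, Nat.card_eq_fintype_card] at hsplit
  omega

theorem card_le_cd2_add {b : ℕ}
    (h : ∀ A B : Finset W, G.IsIndepSet A → G.IsIndepSet B → #A + #B ≤ b) :
    Fintype.card W ≤ cd2 G + b := by
  suffices Fintype.card W - b ≤ cd2 G by omega
  refine le_csInf
    ⟨_, Set.univ, rfl, ⟨Coloring.mk (fun _ => 0) fun {x} => (x.2 (Set.mem_univ _)).elim⟩⟩ ?_
  rintro _ ⟨X, rfl, ⟨c⟩⟩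
  let cls (j : Fin 2) : Finset W := univ.filter fun x => ∃ hx : x ∈ Xᶜ, c ⟨x, hx⟩ = j
  have hcls (j : Fin 2) : G.IsIndepSet (cls j) := by
    intro x hx y hy _ hxy
    simp only [cls, coe_filter, mem_univ, true_and, Set.mem_ofPred_eq] at hx hy
    obtain ⟨hx, rfl⟩ := hx
    obtain ⟨hy, hcy⟩ := hy
    exact c.valid (show (G.induce Xᶜ).Adj ⟨x, hx⟩ ⟨y, hy⟩ from hxy) hcy.symm
  have hcover : Xᶜ.toFinset ⊆ cls 0 ∪ cls 1 := by
    intro x hx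
    rw [Set.mem_toFinset] at hx
    simp only [cls, mem_union, mem_filter, mem_univ, true_and]
    rcases Fin.exists_fin_two.mp ⟨c ⟨x, hx⟩, rfl⟩ with h | h
    · exact Or.inl ⟨hx, h⟩
    · exact Or.inr ⟨hx, h⟩
  have hsplit := Set.ncard_add_ncard_compl X
  rw [Set.ncard_eq_toFinset_card' Xᶜ, Nat.card_eq_fintype_card] at hsplit
  have := (card_le_card hcover).trans (card_union_le _ _)
  have := h _ _ (hcls 0) (hcls 1)
  omega

end TwoColorabilityDefect

section EdgesWithin

variable {V : Type*} [Fintype V] {H : SimpleGraph V}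

theorem exists_isIndepSet_card_le_card_add (U : Finset V) :
    ∃ S ⊆ U, H.IsIndepSet (S : Set V) ∧ #U ≤ #S + #(H.edgeFinset ∩ U.sym2) := by
  induction U using Finset.strongInduction with
  | H U ih =>
    by_cases hU : H.IsIndepSet (U : Set V)
    · exact ⟨U, subset_rfl, hU, by omega⟩
    obtain ⟨u, hu, v, hv, -, huv⟩ : ∃ u ∈ U, ∃ v ∈ U, u ≠ v ∧ H.Adj u v := by
      simpa [IsIndepSet, Set.Pairwise] using hU
    obtain ⟨S, hSU, hS, hcard⟩ := ih (U.erase u) (erase_ssubset hu)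
    have hedges : H.edgeFinset ∩ (U.erase u).sym2 ⊂ H.edgeFinset ∩ U.sym2 := by
      refine (ssubset_iff_of_subset ?_).2 ⟨s(u, v), ?_, ?_⟩
      · exact inter_subset_inter_left (sym2_mono (erase_subset u U))
      · simp [huv, hu, hv]
      · simp
    have := card_lt_card hedges
    have := card_erase_add_one hu
    exact ⟨S, hSU.trans (erase_subset u U), hS, by omega⟩

theorem card_le_indepNum_add_card (U : Finset V) :
    #U ≤ H.indepNum + #(H.edgeFinset ∩ U.sym2) := by
  obtain ⟨S, -, hS, hcard⟩ := exists_isIndepSet_card_le_card_add (H := H) U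
  have := hS.card_le_indepNum
  omega

/-- Away from a vertex `y ∉ U`, each neighbour of `y` in `U` is charged to an edge inside `U`
through it; by triangle-freeness no edge is charged twice, and `y` extends the independent set
left over by the greedy bound. -/
theorem card_lt_indepNum_add_card_of_notMem (htf : H.CliqueFree 3) {U : Finset V} {y : V}
    (hy : y ∉ U) (hU : ∀ x ∈ U, H.Adj y x → ∃ e ∈ H.edgeFinset ∩ U.sym2, x ∈ e) :
    #U < H.indepNum + #(H.edgeFinset ∩ U.sym2) := by
  set M := H.edgeFinset ∩ U.sym2
  set N := U.filter (H.Adj y)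
  obtain ⟨S, hSU, hS, hcard⟩ := exists_isIndepSet_card_le_card_add (H := H) (U \ N)
  have hN : #N ≤ #(M.filter fun e => ∃ x ∈ N, x ∈ e) := by
    refine card_le_card_of_forall_subsingleton (· ∈ ·) (fun x hx => ?_) (fun e _ => ?_)
    · obtain ⟨e, he, hxe⟩ := hU x (mem_filter.1 hx).1 (mem_filter.1 hx).2
      exact ⟨e, mem_filter.2 ⟨he, x, hx, hxe⟩, hxe⟩
    · intro x ⟨hx, hxe⟩ x' ⟨hx', hx'e⟩
      by_contra hne
      have hM := (mem_filter.1 ‹e ∈ M.filter _›).1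
      rw [(Sym2.mem_and_mem_iff hne).1 ⟨hxe, hx'e⟩, mem_inter, mem_edgeFinset, mem_edgeSet] at hM
      exact htf.not_adj_of_adj_of_adj (mem_filter.1 hx).2 (mem_filter.1 hx').2 hM.1
  have hrest : #(H.edgeFinset ∩ (U \ N).sym2) ≤ #(M.filter fun e => ¬∃ x ∈ N, x ∈ e) := by
    refine card_le_card fun e he => ?_
    simp only [mem_inter, mem_sym2_iff, mem_sdiff] at he
    exact mem_filter.2 ⟨mem_inter.2 ⟨he.1, mem_sym2_iff.2 fun x hx => (he.2 x hx).1⟩,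
      fun ⟨x, hxN, hxe⟩ => (he.2 x hxe).2 hxN⟩
  have hSy : H.IsIndepSet (insert y S : Finset V) := by
    have hyS : ∀ x ∈ S, ¬H.Adj y x := fun x hx hyx => by
      have := hSU hx
      simp only [mem_sdiff, mem_filter, N] at this
      exact this.2 ⟨this.1, hyx⟩
    intro a ha b hb hab
    simp only [coe_insert, Set.mem_insert_iff, mem_coe] at ha hb
    rcases ha with rfl | ha <;> rcases hb with rfl | hb
    · exact (hab rfl).elim
    · exact hyS b hb
    · exact fun h => hyS a ha h.symm
    · exact hS ha hb hab
  have hyS : y ∉ S := fun h => hy (mem_sdiff.1 (hSU h)).1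
  have := hSy.card_le_indepNum
  rw [card_insert_of_notMem hyS] at this
  have := card_filter_add_card_filter_not (s := M) (fun e => ∃ x ∈ N, x ∈ e)
  have := card_sdiff_add_card_eq_card (show N ⊆ U from filter_subset _ _)
  omega

theorem card_lt_card_add_indepNum (hconn : H.Connected) (htf : H.CliqueFree 3)
    (hα : 2 ≤ H.indepNum) {U : Finset V} {E : Finset (Sym2 V)} (hUE : ∀ v ∈ U, ∃ e ∈ E, v ∈ e)
    (hinner : H.edgeFinset ∩ U.sym2 ⊆ E) :
    #U < #E + H.indepNum := by
  by_cases hiso : ∃ v ∈ U, ∀ e ∈ H.edgeFinset ∩ U.sym2, v ∉ e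
  · obtain ⟨v, hv, hvM⟩ := hiso
    obtain ⟨e, he, hve⟩ := hUE v hv
    have := card_lt_card ((ssubset_iff_of_subset hinner).2 ⟨e, he, fun heM => hvM e heM hve⟩)
    have := card_le_indepNum_add_card (H := H) U
    omega
  push Not at hiso
  by_cases hall : ∀ y, y ∈ U
  · have hconnE := hconn.card_vert_le_card_edgeSet_add_one
    have hE : H.edgeFinset ⊆ E := fun e he =>
      hinner (mem_inter.2 ⟨he, mem_sym2_iff.2 fun x _ => hall x⟩)
    have hU : U = univ := eq_univ_of_forall hall
    rw [Nat.card_eq_fintype_card, Nat.card_eq_fintype_card, ← edgeFinset_card, ← card_univ,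
      ← hU] at hconnE
    have := card_le_card hE
    omega
  · push Not at hall
    obtain ⟨y, hy⟩ := hall
    have := card_lt_indepNum_add_card_of_notMem htf hy fun x hx _ => hiso x hx
    have := card_le_card hinner
    omega

end EdgesWithin

section IntersectingEdges

variable {W : Type*} {G : SimpleGraph W}

theorem exists_mem_mem_of_color_eq {α : Type*} (C : (KG G).Coloring α) {e f : G.edgeSet}
    (h : C e = C f) : ∃ x, x ∈ (e : Sym2 W) ∧ x ∈ (f : Sym2 W) := by
  by_cases hef : e = f
  · exact ⟨_, Sym2.out_fst_mem _, hef ▸ Sym2.out_fst_mem _⟩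
  by_contra hdisj
  push Not at hdisj
  exact C.valid ⟨hef, hdisj⟩ h

theorem colorable_KG_of_forall_exists {κ : Type*} [Fintype κ] (P : κ → Sym2 W → Prop)
    (hcov : ∀ e ∈ G.edgeSet, ∃ i, P i e)
    (hint : ∀ i, ∀ e ∈ G.edgeSet, ∀ f ∈ G.edgeSet, P i e → P i f → ∃ x, x ∈ e ∧ x ∈ f) :
    (KG G).Colorable (Fintype.card κ) := by
  choose c hc using fun e : G.edgeSet => hcov e e.2
  refine (Coloring.mk c fun {e f} hef hcef => ?_).colorable
  obtain ⟨x, hxe, hxf⟩ := hint (c e) e e.2 f f.2 (hc e) (hcef ▸ hc f)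
  exact hef.2 x hxe hxf

theorem Sym2.eq_or_eq_or_eq_of_meets {x y z : W} (hxy : x ≠ y) (hyz : y ≠ z) (hxz : x ≠ z)
    {e : Sym2 W} (h₁ : x ∈ e ∨ y ∈ e) (h₂ : y ∈ e ∨ z ∈ e) (h₃ : x ∈ e ∨ z ∈ e) :
    e = s(x, y) ∨ e = s(y, z) ∨ e = s(x, z) := by
  by_cases hx : x ∈ e <;> by_cases hy : y ∈ e
  · exact Or.inl ((Sym2.mem_and_mem_iff hxy).1 ⟨hx, hy⟩)
  · exact Or.inr (Or.inr ((Sym2.mem_and_mem_iff hxz).1 ⟨hx, h₂.resolve_left hy⟩))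
  · exact Or.inr (Or.inl ((Sym2.mem_and_mem_iff hyz).1 ⟨hy, h₃.resolve_left hx⟩))
  · exact (h₁.elim hx hy).elim

theorem exists_star_or_triangle [Nonempty W] {F : Set (Sym2 W)} (hF : F ⊆ G.edgeSet)
    (hint : ∀ e ∈ F, ∀ f ∈ F, ∃ x, x ∈ e ∧ x ∈ f) :
    (∃ w, ∀ e ∈ F, w ∈ e) ∨ ∃ x y z, G.Adj x y ∧ G.Adj y z ∧ G.Adj x z ∧
      ∀ e ∈ F, e = s(x, y) ∨ e = s(y, z) ∨ e = s(x, z) := by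
  by_cases hstar : ∃ w, ∀ e ∈ F, w ∈ e
  · exact Or.inl hstar
  push Not at hstar
  have meet {e f : Sym2 W} {a b : W} (he : e ∈ F) (hf : f ∈ F) (hfa : a ∉ f) (hea : e = s(a, b)) :
      b ∈ f := by
    obtain ⟨w, hwe, hwf⟩ := hint e he f hf
    rcases Sym2.mem_iff.1 (hea ▸ hwe) with rfl | rfl
    exacts [(hfa hwf).elim, hwf]
  obtain ⟨e₁, he₁, -⟩ := hstar (Classical.arbitrary W)
  obtain ⟨x, y, rfl⟩ : ∃ x y, e₁ = s(x, y) := ⟨_, _, (Quot.out_eq e₁).symm⟩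
  obtain ⟨e₂, he₂, hxe₂⟩ := hstar x
  obtain ⟨z, rfl⟩ := Sym2.mem_iff_exists.1 (meet he₁ he₂ hxe₂ rfl)
  obtain ⟨e₃, he₃, hye₃⟩ := hstar y
  have hxy : G.Adj x y := hF he₁
  have hyz : G.Adj y z := hF he₂
  have hzx : z ≠ x := fun h => hxe₂ (h ▸ Sym2.mem_mk_right y z)
  have hx₃ : x ∈ e₃ := meet he₁ he₃ hye₃ Sym2.eq_swap
  have hz₃ : z ∈ e₃ := meet he₂ he₃ hye₃ rfl
  have he₃eq : e₃ = s(x, z) := (Sym2.mem_and_mem_iff hzx.symm).1 ⟨hx₃, hz₃⟩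
  have hxz : G.Adj x z := by simpa [he₃eq] using hF he₃
  refine Or.inr ⟨x, y, z, hxy, hyz, hxz, fun e he => ?_⟩
  have hits {f : Sym2 W} {a b : W} (hf : f ∈ F) (hfab : f = s(a, b)) : a ∈ e ∨ b ∈ e := by
    obtain ⟨w, hwe, hwf⟩ := hint e he f hf
    rcases Sym2.mem_iff.1 (hfab ▸ hwf) with rfl | rfl
    exacts [Or.inl hwe, Or.inr hwe]
  exact Sym2.eq_or_eq_or_eq_of_meets (G.ne_of_adj hxy) (G.ne_of_adj hyz) hzx.symm
    (hits he₁ rfl) (hits he₂ rfl) (hits he₃ he₃eq)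

end IntersectingEdges

section Join

variable {V : Type*} {H : SimpleGraph V} {k : ℕ}

@[simp] theorem Hk_adj_inl_inr {v : V} {t : Fin k × Fin 3} :
    (Hk H k).Adj (.inl v) (.inr t) := trivial

@[simp] theorem Hk_adj_inr_inr {t t' : Fin k × Fin 3} :
    (Hk H k).Adj (.inr t) (.inr t') ↔ t.1 = t'.1 ∧ t.2 ≠ t'.2 := Iff.rfl

theorem isIndepSet_disjSum_empty {S : Finset V} (hS : H.IsIndepSet (S : Set V)) :
    (Hk H k).IsIndepSet ((S.disjSum ∅ : Finset (V ⊕ Fin k × Fin 3)) : Set _) := by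
  rintro (u | t) hu (v | t') hv huv <;> simp at hu hv
  exact hS hu hv (by simpa using huv)

theorem isIndepSet_empty_disjSum_layer (j : Fin 3) :
    (Hk H k).IsIndepSet ((((∅ : Finset V).disjSum (univ ×ˢ {j})) :
      Finset (V ⊕ Fin k × Fin 3)) : Set _) := by
  rintro (u | t) hu (v | t') hv - <;> simp_all [-product_singleton]

variable [Fintype V]

theorem card_Hk_vertices : Fintype.card (V ⊕ Fin k × Fin 3) = Fintype.card V + 3 * k := by
  simp [mul_comm]

/-- An independent set of the join lies on one side of it, and meets each triangle at most
once. -/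
theorem SimpleGraph.IsIndepSet.card_le_max_indepNum {A : Finset (V ⊕ Fin k × Fin 3)}
    (hA : (Hk H k).IsIndepSet (A : Set _)) : #A ≤ max H.indepNum k := by
  rw [← card_toLeft_add_card_toRight]
  by_cases hR : A.toRight = ∅
  · have : H.IsIndepSet (A.toLeft : Set V) := fun u hu v hv huv h =>
      hA (mem_toLeft.1 hu) (mem_toLeft.1 hv) (by simpa using huv) h
    have := this.card_le_indepNum
    rw [hR, card_empty]
    omega
  · obtain ⟨t, ht⟩ := nonempty_iff_ne_empty.2 hR
    have hL : A.toLeft = ∅ := eq_empty_of_forall_notMem fun v hv =>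
      hA (mem_toLeft.1 hv) (mem_toRight.1 ht) (by simp) Hk_adj_inl_inr
    have : #A.toRight ≤ k := by
      refine (card_le_card_of_injOn Prod.fst (fun _ _ => mem_coe.2 (mem_univ _)) ?_).trans
        (by simp)
      intro t ht t' ht' hfst
      by_contra hne
      exact hA (mem_toRight.1 ht) (mem_toRight.1 ht') (by simpa using hne)
        (Hk_adj_inr_inr.2 ⟨hfst, fun h => hne (Prod.ext hfst h)⟩)
    rw [hL, card_empty]
    omega

theorem cd2_Hk_le : cd2 (Hk H k) ≤ Fintype.card V + k := by
  have := cd2_add_card_add_card_le (isIndepSet_empty_disjSum_layer (H := H) (k := k) 1)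
    (isIndepSet_empty_disjSum_layer 2) (by simp [Finset.disjoint_left, -product_singleton])
  simp only [card_disjSum, card_empty, card_product, card_univ, Fintype.card_fin,
    card_singleton, card_Hk_vertices] at this
  omega

theorem cd2_Hk_add_indepNum_le : cd2 (Hk H k) + H.indepNum ≤ Fintype.card V + 2 * k := by
  obtain ⟨S, hS⟩ := H.exists_isNIndepSet_indepNum
  have := cd2_add_card_add_card_le (isIndepSet_disjSum_empty (k := k) hS.isIndepSet)
    (isIndepSet_empty_disjSum_layer 0) (by simp [Finset.disjoint_left, -product_singleton])
  simp only [card_disjSum, card_empty, card_product, card_univ, Fintype.card_fin,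
    card_singleton, card_Hk_vertices, hS.card_eq] at this
  omega

theorem card_add_le_cd2_Hk (hα : H.indepNum ≤ k) : Fintype.card V + k ≤ cd2 (Hk H k) := by
  have := card_le_cd2_add (G := Hk H k) (b := 2 * k) fun A B hA hB => by
    have := hA.card_le_max_indepNum
    have := hB.card_le_max_indepNum
    omega
  rw [card_Hk_vertices] at this
  omega

end Join

section Shapes

variable {V : Type*} {H : SimpleGraph V} {k : ℕ}

def InBlock (b : Fin k) (e : Sym2 (V ⊕ Fin k × Fin 3)) : Prop :=
  ∀ x ∈ e, ∃ j, x = .inr (b, j)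

theorem InBlock.exists_mem_mem {b : Fin k} {e f : Sym2 (V ⊕ Fin k × Fin 3)}
    (he : e ∈ (Hk H k).edgeSet) (hf : f ∈ (Hk H k).edgeSet) (hbe : InBlock b e)
    (hbf : InBlock b f) : ∃ x, x ∈ e ∧ x ∈ f := by
  induction e using Sym2.ind with | _ x₁ x₂ =>
  induction f using Sym2.ind with | _ x₃ x₄ =>
  obtain ⟨j₁, rfl⟩ := hbe x₁ (Sym2.mem_mk_left _ _)
  obtain ⟨j₂, rfl⟩ := hbe x₂ (Sym2.mem_mk_right _ _)
  obtain ⟨j₃, rfl⟩ := hbf x₃ (Sym2.mem_mk_left _ _)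
  obtain ⟨j₄, rfl⟩ := hbf x₄ (Sym2.mem_mk_right _ _)
  simp only [mem_edgeSet, Hk_adj_inr_inr, true_and] at he hf
  have pigeonhole : ∀ j₁ j₂ j₃ j₄ : Fin 3, j₁ ≠ j₂ → j₃ ≠ j₄ →
      j₁ = j₃ ∨ j₁ = j₄ ∨ j₂ = j₃ ∨ j₂ = j₄ := by decide
  rcases pigeonhole j₁ j₂ j₃ j₄ he hf with rfl | rfl | rfl | rfl <;> simp

theorem colorable_KG_Hk [Fintype V] :
    (KG (Hk H k)).Colorable (Fintype.card (V ⊕ Fin k)) := by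
  refine colorable_KG_of_forall_exists (fun i e => Sum.elim (fun v => .inl v ∈ e)
    (fun b => InBlock b e) i) (fun e he => ?_) ?_
  · induction e using Sym2.ind with | _ x y =>
    rcases x with v | t
    · exact ⟨.inl v, Sym2.mem_mk_left _ _⟩
    rcases y with v | t'
    · exact ⟨.inl v, Sym2.mem_mk_right _ _⟩
    obtain ⟨hb, -⟩ := (Hk_adj_inr_inr (H := H)).1 he
    refine ⟨.inr t.1, fun x hx => ?_⟩
    rcases Sym2.mem_iff.1 hx with rfl | rfl
    exacts [⟨t.2, rfl⟩, ⟨t'.2, by rw [hb]⟩]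
  · rintro (v | b) e he f hf hPe hPf
    exacts [⟨_, hPe, hPf⟩, hPe.exists_mem_mem he hf hPf]

theorem chromNum_KG_Hk_le [Fintype V] : chromNum (KG (Hk H k)) ≤ Fintype.card V + k := by
  have := colorable_KG_Hk (H := H) (k := k)
  rw [Fintype.card_sum, Fintype.card_fin] at this
  exact Nat.sInf_le this

/-- Stars at a vertex of `H` or of a triangle, and the triangles of `Hk H k`: one of the `k`
triangles, or a triangle through one vertex (`mixed`) or through an edge (`hTri`) of `H`. -/
inductive ClassShape (V : Type*) (k : ℕ)
  | starV (v : V)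
  | starT (t : Fin k × Fin 3)
  | block (b : Fin k)
  | mixed (v : V) (t t' : Fin k × Fin 3)
  | hTri (u w : V) (t : Fin k × Fin 3)

namespace ClassShape

def Contains : ClassShape V k → Sym2 (V ⊕ Fin k × Fin 3) → Prop
  | starV v, e => .inl v ∈ e
  | starT t, e => .inr t ∈ e
  | block b, e => InBlock b e
  | mixed v t t', e => e = s(.inl v, .inr t) ∨ e = s(.inl v, .inr t') ∨ e = s(.inr t, .inr t')
  | hTri u w t, e => e = s(.inl u, .inl w) ∨ e = s(.inl u, .inr t) ∨ e = s(.inl w, .inr t)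

def kind : ClassShape V k → Fin 5
  | starV _ => 0
  | starT _ => 1
  | block _ => 2
  | mixed .. => 3
  | hTri .. => 4

end ClassShape

open ClassShape

theorem exists_classShape [Nonempty V] (htf : H.CliqueFree 3) {F : Set (Sym2 (V ⊕ Fin k × Fin 3))}
    (hF : F ⊆ (Hk H k).edgeSet) (hint : ∀ e ∈ F, ∀ f ∈ F, ∃ x, x ∈ e ∧ x ∈ f) :
    ∃ σ : ClassShape V k, ∀ e ∈ F, σ.Contains e := by
  rcases exists_star_or_triangle hF hint with ⟨w | t, hw⟩ | ⟨x, y, z, hxy, hyz, hxz, htri⟩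
  · exact ⟨starV w, hw⟩
  · exact ⟨starT t, hw⟩
  rcases x with a | t <;> rcases y with b | t' <;> rcases z with c | t''
  · exact (htf.not_adj_of_adj_of_adj hxy hxz hyz).elim
  · exact ⟨hTri a b t'', fun e he => by
      rcases htri e he with rfl | rfl | rfl <;> simp [Contains]⟩
  · exact ⟨hTri a c t', fun e he => by
      rcases htri e he with rfl | rfl | rfl <;> simp [Contains]⟩
  · exact ⟨mixed a t' t'', fun e he => by
      rcases htri e he with rfl | rfl | rfl <;> simp [Contains]⟩
  · exact ⟨hTri b c t, fun e he => by
      rcases htri e he with rfl | rfl | rfl <;> simp [Contains]⟩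
  · exact ⟨mixed b t t'', fun e he => by
      rcases htri e he with rfl | rfl | rfl <;> simp [Contains]⟩
  · exact ⟨mixed c t t', fun e he => by
      rcases htri e he with rfl | rfl | rfl <;> simp [Contains]⟩
  · refine ⟨block t.1, fun e he x hx => ?_⟩
    simp only [Hk_adj_inr_inr] at hxy hxz
    rcases htri e he with rfl | rfl | rfl <;> rcases Sym2.mem_iff.1 hx with rfl | rfl
    exacts [⟨_, rfl⟩, ⟨t'.2, by rw [hxy.1]⟩, ⟨t'.2, by rw [hxy.1]⟩, ⟨t''.2, by rw [hxz.1]⟩,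
      ⟨_, rfl⟩, ⟨t''.2, by rw [hxz.1]⟩]

theorem exists_classShape_of_coloring [Nonempty V] (htf : H.CliqueFree 3) {α : Type*}
    (C : (KG (Hk H k)).Coloring α) :
    ∃ shape : α → ClassShape V k, ∀ e, (shape (C e)).Contains e := by
  have hshape (i : α) : ∃ σ : ClassShape V k, ∀ e, C e = i → σ.Contains e := by
    obtain ⟨σ, hσ⟩ := exists_classShape htf (F := Subtype.val '' {e | C e = i})
      (by rintro _ ⟨e, -, rfl⟩; exact e.2)
      (by rintro _ ⟨e, he, rfl⟩ _ ⟨f, hf, rfl⟩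
          exact exists_mem_mem_of_color_eq C (he.trans hf.symm))
    exact ⟨σ, fun e he => hσ e ⟨e, he, rfl⟩⟩
  choose shape hshape using hshape
  exact ⟨shape, fun e => hshape _ e rfl⟩

end Shapes

section Counting

variable {V : Type*} {H : SimpleGraph V} {k m : ℕ}
  {c : (Hk H k).edgeSet → Fin m} {shape : Fin m → ClassShape V k}

open ClassShape

def numKind (shape : Fin m → ClassShape V k) (j : Fin 5) : ℕ :=
  #{i | (shape i).kind = j}

theorem sum_numKind (shape : Fin m → ClassShape V k) : ∑ j, numKind shape j = m := by
  simp only [numKind]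
  rw [← card_eq_sum_card_fiberwise (fun i _ => mem_univ ((shape i).kind)), card_univ,
    Fintype.card_fin]

theorem card_le_sum_numKind {ι : Type*} (s : Finset ι) (f : ι → Fin m) (w : Fin 5 → ℕ)
    (hw : ∀ i, #{x ∈ s | f x = i} ≤ w (shape i).kind) :
    #s ≤ ∑ j, w j * numKind shape j := by
  calc #s = ∑ i, #{x ∈ s | f x = i} := card_eq_sum_card_fiberwise fun x _ => mem_univ (f x)
    _ ≤ ∑ i, w (shape i).kind := sum_le_sum fun i _ => hw i
    _ = ∑ j, ∑ i with (shape i).kind = j, w (shape i).kind := (sum_fiberwise _ _ _).symm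
    _ = ∑ j, w j * numKind shape j := sum_congr rfl fun j _ => by
      rw [sum_congr rfl fun i hi => congrArg w (mem_filter.1 hi).2, sum_const, smul_eq_mul,
        mul_comm, numKind]

variable (H) in
def joinEdge (v : V) (t : Fin k × Fin 3) : (Hk H k).edgeSet :=
  ⟨s(.inl v, .inr t), by simp⟩

theorem card_filter_joinEdge_le (hc : ∀ e, (shape (c e)).Contains e) {U : Finset V}
    (hU : ∀ v ∈ U, ∀ i, shape i ≠ starV v) (i : Fin m) :
    #{p ∈ U ×ˢ (univ : Finset (Fin k × Fin 3)) | c (joinEdge H p.1 p.2) = i} ≤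
      ![0, #U, 0, 2, 2] (shape i).kind := by
  have hfib : ∀ p ∈ {p ∈ U ×ˢ (univ : Finset (Fin k × Fin 3)) | c (joinEdge H p.1 p.2) = i},
      p.1 ∈ U ∧ (shape i).Contains s(.inl p.1, .inr p.2) := fun p hp => by
    obtain ⟨hpU, rfl⟩ := mem_filter.1 hp
    exact ⟨(mem_product.1 hpU).1, hc _⟩
  cases hσ : shape i with
  | starV v =>
    refine (card_eq_zero.2 (eq_empty_of_forall_notMem fun p hp => ?_)).le
    obtain ⟨hpU, hp⟩ := hfib p hp
    simp only [hσ, Contains, Sym2.mem_iff, Sum.inl.injEq, reduceCtorEq, or_false] at hp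
    exact hU _ hpU i (hp ▸ hσ)
  | starT t =>
    refine (card_le_card fun p hp => ?_).trans (card_product U {t}).le |>.trans (by simp [kind])
    obtain ⟨hpU, hp⟩ := hfib p hp
    simp only [hσ, Contains, Sym2.mem_iff, Sum.inr.injEq, reduceCtorEq, false_or] at hp
    simp [hpU, hp]
  | block b =>
    refine (card_eq_zero.2 (eq_empty_of_forall_notMem fun p hp => ?_)).le
    obtain ⟨-, hp⟩ := hfib p hp
    obtain ⟨j, hj⟩ := (hσ ▸ hp : InBlock b _) _ (Sym2.mem_mk_left _ _)
    exact Sum.inl_ne_inr hj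
  | mixed v t t' =>
    refine (card_le_card (t := {(v, t), (v, t')}) fun p hp => ?_).trans card_le_two
    obtain ⟨-, hp⟩ := hfib p hp
    simpa [hσ, Contains, Prod.ext_iff] using hp
  | hTri u w t =>
    refine (card_le_card (t := {(u, t), (w, t)}) fun p hp => ?_).trans card_le_two
    obtain ⟨-, hp⟩ := hfib p hp
    simpa [hσ, Contains, Prod.ext_iff] using hp

theorem card_mul_le_numKind_join (hc : ∀ e, (shape (c e)).Contains e) {U : Finset V}
    (hU : ∀ v ∈ U, ∀ i, shape i ≠ starV v) :
    3 * k * #U ≤ #U * numKind shape 1 + 2 * numKind shape 3 + 2 * numKind shape 4 := by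
  have := card_le_sum_numKind _ _ _ (card_filter_joinEdge_le hc hU)
  simp only [card_product, card_univ, Fintype.card_prod, Fintype.card_fin, Fin.sum_univ_five,
    Fin.isValue, Matrix.cons_val_zero, zero_mul, Matrix.cons_val_one, zero_add, Matrix.cons_val,
    add_zero] at this
  linarith

variable (H) in
/-- The edge of the `p.1`-th triangle opposite to its vertex `p.2`. -/
def blockEdge (p : Fin k × Fin 3) : (Hk H k).edgeSet :=
  ⟨s(.inr (p.1, p.2 + 1), .inr (p.1, p.2 + 2)), by simp⟩

theorem inr_mem_blockEdge {p q : Fin k × Fin 3} :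
    .inr q ∈ (blockEdge H p : Sym2 (V ⊕ Fin k × Fin 3)) ↔ q.1 = p.1 ∧ q.2 ≠ p.2 := by
  have opposite : ∀ a b : Fin 3, a = b + 1 ∨ a = b + 2 ↔ a ≠ b := by decide
  simp only [blockEdge, Sym2.mem_iff, Sum.inr.injEq, Prod.ext_iff, ← and_or_left, opposite]

theorem inl_notMem_blockEdge {p : Fin k × Fin 3} {v : V} :
    .inl v ∉ (blockEdge H p : Sym2 (V ⊕ Fin k × Fin 3)) := by
  simp [blockEdge]

theorem blockEdge_injective : Function.Injective (blockEdge H (k := k)) := by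
  intro p q hpq
  have hmem (r : Fin k × Fin 3) := congrArg (Sum.inr r ∈ ·) (congrArg Subtype.val hpq)
  have h₁ := hmem (p.1, p.2 + 1)
  have h₂ := hmem (q.1, p.2)
  simp only [inr_mem_blockEdge, eq_iff_iff] at h₁ h₂
  have hsucc : ∀ a : Fin 3, a + 1 ≠ a := by decide
  exact Prod.ext (h₁.1 ⟨trivial, hsucc _⟩).1 (not_not.1 fun h => (h₂.2 ⟨trivial, h⟩).2 rfl)

theorem card_filter_blockEdge_le (hc : ∀ e, (shape (c e)).Contains e) (i : Fin m) :
    #{p | c (blockEdge H p) = i} ≤ ![0, 2, 3, 1, 0] (shape i).kind := by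
  have hfib : ∀ p ∈ ({p | c (blockEdge H p) = i} : Finset _),
      (shape i).Contains (blockEdge H p) := fun p hp => (mem_filter.1 hp).2 ▸ hc _
  cases hσ : shape i with
  | starV v =>
    refine (card_eq_zero.2 (eq_empty_of_forall_notMem fun p hp => ?_)).le
    exact inl_notMem_blockEdge (hσ ▸ hfib p hp)
  | starT t =>
    refine (card_le_card (t := {t.1} ×ˢ {t.2}ᶜ) fun p hp => ?_).trans
      (by rw [card_product, card_compl]; simp [kind])
    have := inr_mem_blockEdge.1 (hσ ▸ hfib p hp)
    simp [this.1, Ne.symm this.2]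
  | block b =>
    refine (card_le_card (t := {b} ×ˢ univ) fun p hp => ?_).trans (by simp [kind])
    obtain ⟨j, hj⟩ := (hσ ▸ hfib p hp : InBlock b _) _ (Sym2.mem_mk_left _ _)
    exact mem_product.2 ⟨mem_singleton.2 (Prod.ext_iff.1 (Sum.inr_injective hj)).1, mem_univ _⟩
  | mixed v t t' =>
    have hedge : ∀ p ∈ ({p | c (blockEdge H p) = i} : Finset _),
        (blockEdge H p : Sym2 (V ⊕ Fin k × Fin 3)) = s(.inr t, .inr t') := fun p hp => by
      rcases (hσ ▸ hfib p hp : (mixed v t t').Contains _) with h | h | h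
      · exact (inl_notMem_blockEdge (h ▸ Sym2.mem_mk_left _ _)).elim
      · exact (inl_notMem_blockEdge (h ▸ Sym2.mem_mk_left _ _)).elim
      · exact h
    exact card_le_one.2 fun p hp q hq =>
      blockEdge_injective (Subtype.ext ((hedge p hp).trans (hedge q hq).symm))
  | hTri u w t =>
    refine (card_eq_zero.2 (eq_empty_of_forall_notMem fun p hp => ?_)).le
    rcases (hσ ▸ hfib p hp : (hTri u w t).Contains _) with h | h | h <;>
      exact inl_notMem_blockEdge (h ▸ Sym2.mem_mk_left _ _)

theorem three_mul_le_numKind_block (hc : ∀ e, (shape (c e)).Contains e) :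
    3 * k ≤ 2 * numKind shape 1 + 3 * numKind shape 2 + numKind shape 3 := by
  have := card_le_sum_numKind _ _ _ (card_filter_blockEdge_le hc)
  simp only [card_univ, Fintype.card_prod, Fintype.card_fin, Fin.sum_univ_five, Fin.isValue,
    Matrix.cons_val_zero, zero_mul, Matrix.cons_val_one, zero_add, Matrix.cons_val, one_mul,
    add_zero] at this
  linarith

theorem card_le_numKind_starV {U : Finset V} (hU : ∀ v ∈ U, ∃ i, shape i = starV v) :
    #U ≤ numKind shape 0 := by
  refine card_le_card_of_forall_subsingleton (fun v i => shape i = starV v) (fun v hv => ?_)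
    fun i _ v hv v' hv' => starV.inj (hv.2.symm.trans hv'.2)
  obtain ⟨i, hi⟩ := hU v hv
  exact ⟨i, mem_filter.2 ⟨mem_univ _, by rw [hi, kind]⟩, hi⟩

theorem three_mul_le_numKind_starT (h : ∀ t, ∃ i, shape i = starT t) :
    3 * k ≤ numKind shape 1 := by
  refine le_of_eq_of_le (by simp [mul_comm]) (card_le_card_of_forall_subsingleton
    (s := (univ : Finset (Fin k × Fin 3))) (fun t i => shape i = starT t) (fun t _ => ?_)
    fun i _ t ht t' ht' => starT.inj (ht.2.symm.trans ht'.2))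
  obtain ⟨i, hi⟩ := h t
  exact ⟨i, mem_filter.2 ⟨mem_univ _, by rw [hi, kind]⟩, hi⟩

variable [Fintype V]

variable (shape) in
noncomputable def hTriEdges : Finset (Sym2 V) :=
  {e | ∃ i u w t, shape i = hTri u w t ∧ e = s(u, w)}

theorem card_hTriEdges_le : #(hTriEdges shape) ≤ numKind shape 4 := by
  refine card_le_card_of_forall_subsingleton
    (fun e i => ∃ u w t, shape i = hTri u w t ∧ e = s(u, w)) (fun e he => ?_) ?_
  · obtain ⟨i, u, w, t, hi, rfl⟩ := (mem_filter.1 he).2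
    exact ⟨i, mem_filter.2 ⟨mem_univ _, by rw [hi, kind]⟩, u, w, t, hi, rfl⟩
  · rintro i - e ⟨-, u, w, t, hi, rfl⟩ e' ⟨-, u', w', t', hi', rfl⟩
    obtain ⟨rfl, rfl, -⟩ := hTri.inj (hi.symm.trans hi')
    rfl

theorem inter_sym2_subset_hTriEdges (hc : ∀ e, (shape (c e)).Contains e) {U : Finset V}
    (hU : ∀ v ∈ U, ∀ i, shape i ≠ starV v) : H.edgeFinset ∩ U.sym2 ⊆ hTriEdges shape := by
  intro e he
  induction e using Sym2.ind with | _ a b =>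
  simp only [mem_inter, mem_edgeFinset, mem_edgeSet, mem_sym2_iff, Sym2.mem_iff,
    forall_eq_or_imp, forall_eq] at he
  obtain ⟨hab, ha, hb⟩ := he
  have hE := hc ⟨s(.inl a, .inl b), hab⟩
  cases hσ : shape (c ⟨s(.inl a, .inl b), hab⟩) with
  | starV v =>
    rw [hσ] at hE
    rcases Sym2.mem_iff.1 hE with h | h <;> obtain rfl := Sum.inl_injective h
    exacts [(hU _ ha _ hσ).elim, (hU _ hb _ hσ).elim]
  | starT t => simp [hσ, Contains] at hE
  | block b' =>
    obtain ⟨j, hj⟩ := (hσ ▸ hE : InBlock b' _) _ (Sym2.mem_mk_left _ _)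
    exact (Sum.inl_ne_inr hj).elim
  | mixed v t t' => simp [hσ, Contains] at hE
  | hTri u w t =>
    refine mem_filter.2 ⟨mem_univ _, _, u, w, t, hσ, ?_⟩
    simp only [hσ, Contains, Sym2.eq_iff, Sum.inl.injEq, reduceCtorEq, and_false,
      false_or] at hE
    simpa [Sym2.eq_iff] using hE

/-- The join edge from `v` to `t₀` can only be coloured by a triangle through an edge of `H`
at `v`. -/
theorem exists_mem_hTriEdges (hc : ∀ e, (shape (c e)).Contains e) {U : Finset V}
    (hU : ∀ v ∈ U, ∀ i, shape i ≠ starV v) (hmixed : ∀ i v t t', shape i ≠ mixed v t t')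
    {t₀ : Fin k × Fin 3} (ht₀ : ∀ i, shape i ≠ starT t₀) :
    ∀ v ∈ U, ∃ e ∈ hTriEdges shape, v ∈ e := by
  intro v hv
  have hE := hc (joinEdge H v t₀)
  cases hσ : shape (c (joinEdge H v t₀)) with
  | starV v' =>
    rw [hσ] at hE
    simp only [Contains, joinEdge, Sym2.mem_iff, Sum.inl.injEq, reduceCtorEq,
      or_false] at hE
    exact (hU v hv _ (hE ▸ hσ)).elim
  | starT t =>
    rw [hσ] at hE
    simp only [Contains, joinEdge, Sym2.mem_iff, Sum.inr.injEq, reduceCtorEq,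
      false_or] at hE
    exact (ht₀ _ (hE ▸ hσ)).elim
  | block b =>
    obtain ⟨j, hj⟩ := (hσ ▸ hE : InBlock b _) _ (Sym2.mem_mk_left _ _)
    exact (Sum.inl_ne_inr hj).elim
  | mixed w t t' => exact (hmixed _ _ _ _ hσ).elim
  | hTri u w t =>
    refine ⟨s(u, w), mem_filter.2 ⟨mem_univ _, _, u, w, t, hσ, rfl⟩, ?_⟩
    rw [hσ] at hE
    have : (v = u ∧ t₀ = t) ∨ (v = w ∧ t₀ = t) := by simpa [Contains, joinEdge] using hE
    rcases this with ⟨rfl, -⟩ | ⟨rfl, -⟩ <;> simp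

end Counting

-- `u` counts the vertices of `H` that are not star centres; `A`, `a`, `b`, `c` count the colour
-- classes of kinds `starT`, `block`, `mixed`, `hTri`.
theorem class_count_arith {n k α u A a b c m : ℕ} (hk : 1 ≤ k)
    (hm : n + A + a + b + c ≤ m + u) (hjoin : 3 * k * u ≤ u * A + 2 * b + 2 * c)
    (hblock : 3 * k ≤ 2 * A + 3 * a + b) (hinner : u ≤ α + c)
    (hcover : b = 0 → A < 3 * k → 2 ≤ α → u < α + c) :
    (α ≤ k → n + k ≤ m) ∧ (k < α → n + 2 * k < m + α) := by
  rcases le_or_gt (3 * k) A with hA | hA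
  · omega
  obtain ⟨D, hD⟩ : ∃ D, 3 * k = A + D + 1 := ⟨3 * k - A - 1, by omega⟩
  have hDu : (D + 1) * u ≤ 2 * b + 2 * c := by nlinarith
  rcases Nat.lt_or_ge u 2 with hu | hu
  · interval_cases u <;> omega
  rcases Nat.eq_zero_or_pos D with rfl | hD1
  · omega
  · have : 2 * u + 2 * (D + 1) ≤ (D + 1) * u + 4 := by
      obtain ⟨u, rfl⟩ := Nat.exists_eq_add_of_le hu
      obtain ⟨D, rfl⟩ := Nat.exists_eq_add_of_le hD1
      nlinarith [Nat.zero_le (D * u)]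
    omega

open ClassShape in
theorem chromNum_lower_bound {V : Type*} [Fintype V] {H : SimpleGraph V} {k m : ℕ}
    (hconn : H.Connected) (htf : H.CliqueFree 3) (hk : 1 ≤ k)
    (hcol : (KG (Hk H k)).Colorable m) :
    (H.indepNum ≤ k → Fintype.card V + k ≤ m) ∧
      (k < H.indepNum → Fintype.card V + 2 * k < m + H.indepNum) := by
  obtain ⟨C⟩ := hcol
  have := hconn.nonempty
  obtain ⟨shape, hc⟩ := exists_classShape_of_coloring htf C
  set U := univ.filter fun v => ∀ i, shape i ≠ starV v
  have hU : ∀ v ∈ U, ∀ i, shape i ≠ starV v := fun v hv => (mem_filter.1 hv).2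
  have hcentres : #Uᶜ ≤ numKind shape 0 :=
    card_le_numKind_starV fun v hv => by simpa [U] using hv
  have hm := sum_numKind shape
  rw [Fin.sum_univ_five] at hm
  have hn := card_add_card_compl U
  have hinner : #U ≤ H.indepNum + numKind shape 4 :=
    (card_le_indepNum_add_card U).trans (add_le_add_right
      ((card_le_card (inter_sym2_subset_hTriEdges hc hU)).trans card_hTriEdges_le) _)
  have hcover (h3 : numKind shape 3 = 0) (h1 : numKind shape 1 < 3 * k) (hα : 2 ≤ H.indepNum) :
      #U < H.indepNum + numKind shape 4 := by
    have hmixed (i v t t') : shape i ≠ mixed v t t' := fun hi =>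
      (eq_empty_iff_forall_notMem.1 (card_eq_zero.1 h3)) i
        (mem_filter.2 ⟨mem_univ _, by rw [hi, kind]⟩)
    obtain ⟨t₀, ht₀⟩ : ∃ t₀, ∀ i, shape i ≠ starT t₀ := by
      by_contra! h
      exact h1.not_ge (three_mul_le_numKind_starT h)
    have := card_lt_card_add_indepNum hconn htf hα (exists_mem_hTriEdges hc hU hmixed ht₀)
      (inter_sym2_subset_hTriEdges hc hU)
    have := card_hTriEdges_le (shape := shape)
    omega
  exact class_count_arith hk (by omega) (card_mul_le_numKind_join hc hU)
    (three_mul_le_numKind_block hc) hinner hcover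

theorem chromNum_KG_Hk_eq_cd2_iff_general {V : Type*} [Fintype V] (H : SimpleGraph V)
    (hconn : H.Connected) (htf : H.CliqueFree 3)
    (k : ℕ) (hk : 1 ≤ k) :
    chromNum (KG (Hk H k)) = cd2 (Hk H k) ↔ _root_.indepNum H ≤ k := by
  rw [indepNum_eq_indepNum]
  have hcol : (KG (Hk H k)).Colorable (chromNum (KG (Hk H k))) :=
    Nat.sInf_mem (s := {n | (KG (Hk H k)).Colorable n}) ⟨_, colorable_KG_Hk⟩
  obtain ⟨hsmall, hlarge⟩ := chromNum_lower_bound hconn htf hk hcol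
  have hcd2 := cd2_Hk_add_indepNum_le (H := H) (k := k)
  constructor
  · intro heq
    by_contra! hα
    have := hlarge hα
    omega
  · intro hα
    have := hsmall hα
    have := card_add_le_cd2_Hk hα
    have := cd2_Hk_le (H := H) (k := k)
    have := chromNum_KG_Hk_le (H := H) (k := k)
    omega

/-- For a connected triangle-free graph `H` with at least one edge, the chromatic number of
the complement of the line graph of the join `Hk H k` of `H` with `k` disjoint triangles
equals the 2-colorability defect of `Hk H k` if and only if the independence number of `H`
is at most `k`. -/
theorem chromNum_KG_Hk_eq_cd2_iff {V : Type*} [Fintype V] (H : SimpleGraph V)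
    (hconn : H.Connected) (htf : H.CliqueFree 3) (hE : H.edgeSet.Nonempty)
    (k : ℕ) (hk : 1 ≤ k) :
    chromNum (KG (Hk H k)) = cd2 (Hk H k) ↔ _root_.indepNum H ≤ k :=
  chromNum_KG_Hk_eq_cd2_iff_general H hconn htf k hk
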